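/- arXiv:2311.11526 — 7 statements merged into one kernel-verified Lean document; each statement's English description precedes it below -/
import Mathlib

section
/- Let f be a continuous strictly positive density on [θ̲, θ̄] and B a continuously differentiable function such that f(θ) + (B(θ)f(θ))' > 0 for all θ. Suppose b : [θ̲, θ̄] → ℝ is continuously differentiable with 1 + b'(θ) > 0, b(θ̄) > 0, and θ̲ + b(θ̲) < E[θ]. Define φ(t) = ∫_t^{θ̄} (θ − t − b(t)) f(θ) dθ. Then φ(θ̲) > 0, φ(θ̄) = 0 with φ strictly negative on some interval (θ̄ − ε, θ̄), and φ is strictly single-crossing from above: there is a unique θ̂ ∈ (θ̲, θ̄) with φ(θ̂) = 0 and φ > 0 on [θ̲, θ̂), φ < 0 on (θ̂, θ̄). -/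
/-!
Write `φ(t) = ∫_t^{θ̄} θ f − (t + b(t)) ∫_t^{θ̄} f`. Its derivative is `−(1 + b') ψ` with
`ψ(t) = ∫_t^{θ̄} f − B(t) f(t)`, and (A1) says exactly that `ψ' = −(f + (B f)') < 0`.
So `φ` falls while `ψ > 0` and rises once `ψ < 0`. By (A2) `ψ(θ̄) = −B(θ̄) f(θ̄) < 0`,
and since `φ(θ̄) = 0 < φ(θ̲)` (by (A3)) the function `φ` cannot be increasing throughout;
hence `ψ` changes sign at some `t₀ < θ̄`, `φ(t₀) < 0`, and `φ` has exactly one zero,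
which lies in `(θ̲, t₀)`.
-/

open Set Filter intervalIntegral

section SingleCrossing

variable {a c : ℝ}

theorem exists_sign_change_of_strictAntiOn {ψ : ℝ → ℝ} (hac : a < c)
    (hψ : ContinuousOn ψ (Icc a c)) (hψ_anti : StrictAntiOn ψ (Icc a c)) (hψc : ψ c < 0) :
    ∃ t₀ ∈ Ico a c, (∀ t ∈ Ico a t₀, 0 < ψ t) ∧ ∀ t ∈ Ioc t₀ c, ψ t < 0 := by
  by_cases hψa : ψ a ≤ 0
  · refine ⟨a, ⟨le_rfl, hac⟩, fun t ht => absurd ht.2 ht.1.not_gt, fun t ht => ?_⟩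
    exact (hψ_anti (left_mem_Icc.2 hac.le) (Ioc_subset_Icc_self ht) ht.1).trans_le hψa
  · obtain ⟨t₀, ht₀, hψt₀⟩ := intermediate_value_Icc' hac.le hψ ⟨hψc.le, (not_le.1 hψa).le⟩
    have ht₀c : t₀ ≠ c := by rintro rfl; exact hψc.ne hψt₀
    refine ⟨t₀, ⟨ht₀.1, lt_of_le_of_ne ht₀.2 ht₀c⟩, fun t ht => ?_, fun t ht => ?_⟩
    · exact hψt₀ ▸ hψ_anti ⟨ht.1, ht.2.le.trans ht₀.2⟩ ht₀ ht.2
    · exact hψt₀ ▸ hψ_anti ht₀ (Ioc_subset_Icc_self (Ioc_subset_Ioc_left ht₀.1 ht)) ht.1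

theorem exists_single_crossing_of_strictAntiOn_of_strictMonoOn {φ : ℝ → ℝ} {t₀ : ℝ}
    (hφ : ContinuousOn φ (Icc a c)) (ht₀ : t₀ ∈ Ico a c)
    (hφ_anti : StrictAntiOn φ (Icc a t₀)) (hφ_mono : StrictMonoOn φ (Icc t₀ c))
    (hφa : 0 < φ a) (hφc : φ c = 0) :
    ∃ θ ∈ Ioo a c, φ θ = 0 ∧ (∀ t ∈ Ico a θ, 0 < φ t) ∧ ∀ t ∈ Ioo θ c, φ t < 0 := by
  have hφt₀ : φ t₀ < 0 :=
    hφc ▸ hφ_mono (left_mem_Icc.2 ht₀.2.le) (right_mem_Icc.2 ht₀.2.le) ht₀.2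
  obtain ⟨θ, hθ, hφθ⟩ :=
    intermediate_value_Icc' ht₀.1 (hφ.mono (Icc_subset_Icc_right ht₀.2.le)) ⟨hφt₀.le, hφa.le⟩
  have haθ : a < θ := lt_of_le_of_ne hθ.1 (by rintro rfl; exact hφa.ne' hφθ)
  have hθt₀ : θ < t₀ := lt_of_le_of_ne hθ.2 (by rintro rfl; exact hφt₀.ne hφθ)
  refine ⟨θ, ⟨haθ, hθt₀.trans ht₀.2⟩, hφθ, fun t ht => ?_, fun t ht => ?_⟩
  · exact hφθ ▸ hφ_anti ⟨ht.1, ht.2.le.trans hθ.2⟩ hθ ht.2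
  · rcases le_or_gt t t₀ with htt₀ | ht₀t
    · exact hφθ ▸ hφ_anti hθ ⟨haθ.le.trans ht.1.le, htt₀⟩ ht.1
    · exact hφc ▸ hφ_mono ⟨ht₀t.le, ht.2.le⟩ (right_mem_Icc.2 ht₀.2.le) ht.2

theorem exists_single_crossing_of_hasDerivAt {φ ψ k : ℝ → ℝ} (hac : a < c)
    (hφ : ContinuousOn φ (Icc a c)) (hψ : ContinuousOn ψ (Icc a c))
    (hψ_anti : StrictAntiOn ψ (Icc a c)) (hk : ∀ t ∈ Ioo a c, 0 < k t)
    (hφ' : ∀ t ∈ Ioo a c, HasDerivAt φ (-(k t * ψ t)) t)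
    (hφa : 0 < φ a) (hφc : φ c = 0) (hψc : ψ c < 0) :
    ∃ θ ∈ Ioo a c, φ θ = 0 ∧ (∀ t ∈ Ico a θ, 0 < φ t) ∧ ∀ t ∈ Ioo θ c, φ t < 0 := by
  obtain ⟨t₀, ht₀, hψ_pos, hψ_neg⟩ :=
    exists_sign_change_of_strictAntiOn hac hψ hψ_anti hψc
  refine exists_single_crossing_of_strictAntiOn_of_strictMonoOn hφ ht₀ ?_ ?_ hφa hφc
  · refine strictAntiOn_of_hasDerivWithinAt_neg (convex_Icc _ _)
      (hφ.mono (Icc_subset_Icc_right ht₀.2.le)) (f' := fun t => -(k t * ψ t)) ?_ ?_ <;>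
      intro t ht <;> simp only [interior_Icc] at ht ⊢
    · exact (hφ' t ⟨ht.1, ht.2.trans ht₀.2⟩).hasDerivWithinAt
    · exact neg_neg_of_pos (mul_pos (hk t ⟨ht.1, ht.2.trans ht₀.2⟩) (hψ_pos t ⟨ht.1.le, ht.2⟩))
  · refine strictMonoOn_of_hasDerivWithinAt_pos (convex_Icc _ _)
      (hφ.mono (Icc_subset_Icc_left ht₀.1)) (f' := fun t => -(k t * ψ t)) ?_ ?_ <;>
      intro t ht <;> simp only [interior_Icc] at ht ⊢
    · exact (hφ' t ⟨ht₀.1.trans_lt ht.1, ht.2⟩).hasDerivWithinAt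
    · exact neg_pos_of_neg
        (mul_neg_of_pos_of_neg (hk t ⟨ht₀.1.trans_lt ht.1, ht.2⟩) (hψ_neg t ⟨ht.1, ht.2.le⟩))

end SingleCrossing

section TailIntegral

variable {f : ℝ → ℝ} {a c : ℝ}

theorem continuousOn_integral_tail (hf : ContinuousOn f (Icc a c)) (hac : a ≤ c) :
    ContinuousOn (fun t => ∫ θ in t..c, f θ) (Icc a c) := by
  rw [← uIcc_of_le hac] at hf ⊢
  exact continuousOn_primitive_interval_left hf.integrableOn_Icc

theorem hasDerivAt_integral_tail (hf : ContinuousOn f (Icc a c)) {t : ℝ} (ht : t ∈ Ioo a c) :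
    HasDerivAt (fun s => ∫ θ in s..c, f θ) (-f t) t := by
  have hnhds : Icc a c ∈ nhds t := Icc_mem_nhds ht.1 ht.2
  refine integral_hasDerivAt_left ?_ ?_ (hf.continuousAt hnhds)
  · exact (hf.mono (uIcc_subset_Icc (Ioo_subset_Icc_self ht)
      (right_mem_Icc.2 (ht.1.trans ht.2).le))).intervalIntegrable
  · exact AEStronglyMeasurable.stronglyMeasurableAtFilter_of_mem
      (hf.aestronglyMeasurable measurableSet_Icc) hnhds

theorem strictAntiOn_integral_tail_sub {h h' : ℝ → ℝ} (hf : ContinuousOn f (Icc a c))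
    (hh : ContinuousOn h (Icc a c)) (hh' : ∀ t ∈ Ioo a c, HasDerivAt h (h' t) t)
    (hpos : ∀ t ∈ Ioo a c, 0 < f t + h' t) (hac : a ≤ c) :
    StrictAntiOn (fun t => (∫ θ in t..c, f θ) - h t) (Icc a c) := by
  refine strictAntiOn_of_hasDerivWithinAt_neg (convex_Icc _ _)
    ((continuousOn_integral_tail hf hac).sub hh) (f' := fun t => -(f t + h' t)) ?_ ?_ <;>
    intro t ht <;> rw [interior_Icc] at ht
  · exact ((hasDerivAt_integral_tail hf ht).sub (hh' t ht)).hasDerivWithinAt.congr_deriv (by ring)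
  · exact neg_neg_of_pos (hpos t ht)

theorem integral_sub_mul_eq {t : ℝ} (hf : ContinuousOn f (uIcc t c)) (x : ℝ) :
    ∫ θ in t..c, (θ - x) * f θ = (∫ θ in t..c, θ * f θ) - x * ∫ θ in t..c, f θ := by
  have hθf : IntervalIntegrable (fun θ => θ * f θ) MeasureTheory.volume t c :=
    (continuousOn_id.mul hf).intervalIntegrable
  simp only [sub_mul]
  rw [integral_sub hθf (hf.intervalIntegrable.const_mul x), integral_const_mul]

end TailIntegral

section TailGap

/-- The paper's `φ(t)`: the expected gap `θ − (t + b(t))` over the tail `θ ≥ t`, unnormalised. -/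
noncomputable def tailGap (f b : ℝ → ℝ) (c t : ℝ) : ℝ := ∫ θ in t..c, (θ - t - b t) * f θ

variable {f b : ℝ → ℝ} {a c : ℝ}

theorem tailGap_eq {t : ℝ} (hf : ContinuousOn f (Icc a c)) (ht : t ∈ Icc a c) :
    tailGap f b c t = (∫ θ in t..c, θ * f θ) - (t + b t) * ∫ θ in t..c, f θ := by
  have hf' : ContinuousOn f (uIcc t c) :=
    hf.mono (uIcc_subset_Icc ht (right_mem_Icc.2 (ht.1.trans ht.2)))
  rw [tailGap, ← integral_sub_mul_eq hf']
  simp only [sub_sub]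

theorem continuousOn_tailGap (hf : ContinuousOn f (Icc a c)) (hb : ContinuousOn b (Icc a c))
    (hac : a ≤ c) : ContinuousOn (tailGap f b c) (Icc a c) := by
  refine ContinuousOn.congr ?_ fun t ht => tailGap_eq hf ht
  exact (continuousOn_integral_tail (continuousOn_id.mul hf) hac).sub
    ((continuousOn_id.add hb).mul (continuousOn_integral_tail hf hac))

theorem hasDerivAt_tailGap (hf : ContinuousOn f (Icc a c)) {t b't : ℝ} (ht : t ∈ Ioo a c)
    (hb : HasDerivAt b b't t) :
    HasDerivAt (tailGap f b c) (b t * f t - (1 + b't) * ∫ θ in t..c, f θ) t := by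
  have hθf : ContinuousOn (fun θ => θ * f θ) (Icc a c) := continuousOn_id.mul hf
  have hφ := (hasDerivAt_integral_tail hθf ht).sub
    (((hasDerivAt_id' t).add hb).mul (hasDerivAt_integral_tail hf ht))
  refine (hφ.congr_of_eventuallyEq ?_).congr_deriv (by simp only [Pi.add_apply]; ring)
  filter_upwards [Icc_mem_nhds ht.1 ht.2] with s hs using tailGap_eq hf hs

end TailGap

theorem stmt_5_general (θl θu : ℝ) (hθ : θl < θu)
    (f b b' B g : ℝ → ℝ)
    (hf : ContinuousOn f (Icc θl θu)) (hfpos : ∀ θ ∈ Icc θl θu, 0 < f θ)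
    (hfdens : (∫ θ in θl..θu, f θ) = 1)
    (hb : ∀ θ ∈ Icc θl θu, HasDerivAt b (b' θ) θ)
    (hb' : ∀ θ ∈ Icc θl θu, -1 < b' θ)
    (hB : ∀ θ ∈ Icc θl θu, B θ = b θ / (1 + b' θ))
    (hg : ∀ θ ∈ Icc θl θu, HasDerivAt (fun t => B t * f t) (g θ) θ)
    (hA1 : ∀ θ ∈ Icc θl θu, 0 < f θ + g θ)
    (hA2 : 0 < b θu)
    (hA3 : θl + b θl < ∫ θ in θl..θu, θ * f θ) :
    (0 < ∫ θ in θl..θu, (θ - θl - b θl) * f θ) ∧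
    ((∫ θ in θu..θu, (θ - θu - b θu) * f θ) = 0) ∧
    (∃ ε > 0, ∀ t ∈ Ioo (θu - ε) θu, (∫ θ in t..θu, (θ - t - b t) * f θ) < 0) ∧
    (∃ θh ∈ Ioo θl θu, (∫ θ in θh..θu, (θ - θh - b θh) * f θ) = 0 ∧
      (∀ t ∈ Ico θl θh, 0 < ∫ θ in t..θu, (θ - t - b t) * f θ) ∧
      (∀ t ∈ Ioo θh θu, (∫ θ in t..θu, (θ - t - b t) * f θ) < 0) ∧
      (∀ t ∈ Ioo θl θu, (∫ θ in t..θu, (θ - t - b t) * f θ) = 0 → t = θh)) := by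
  have hu : θu ∈ Icc θl θu := right_mem_Icc.2 hθ.le
  have hk : ∀ t ∈ Icc θl θu, 0 < 1 + b' t := fun t ht => by linarith [hb' t ht]
  set ψ : ℝ → ℝ := fun t => (∫ θ in t..θu, f θ) - B t * f t
  have hBf : ContinuousOn (fun t => B t * f t) (Icc θl θu) := fun t ht =>
    (hg t ht).continuousAt.continuousWithinAt
  have hψ : ContinuousOn ψ (Icc θl θu) := (continuousOn_integral_tail hf hθ.le).sub hBf
  have hψ_anti : StrictAntiOn ψ (Icc θl θu) :=
    strictAntiOn_integral_tail_sub hf hBf (fun t ht => hg t (Ioo_subset_Icc_self ht))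
      (fun t ht => hA1 t (Ioo_subset_Icc_self ht)) hθ.le
  have hφ' : ∀ t ∈ Ioo θl θu, HasDerivAt (tailGap f b θu) (-((1 + b' t) * ψ t)) t := by
    intro t ht
    have hbB : b t = B t * (1 + b' t) := by
      rw [hB t (Ioo_subset_Icc_self ht), div_mul_cancel₀ _ (hk t (Ioo_subset_Icc_self ht)).ne']
    exact (hasDerivAt_tailGap hf ht (hb t (Ioo_subset_Icc_self ht))).congr_deriv
      (by rw [hbB]; ring)
  have hφl : 0 < tailGap f b θu θl := by
    rw [tailGap_eq hf (left_mem_Icc.2 hθ.le), hfdens]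
    linarith
  have hψu : ψ θu < 0 := by
    have hBu : 0 < B θu := hB θu hu ▸ div_pos hA2 (hk θu hu)
    simpa [ψ] using mul_pos hBu (hfpos θu hu)
  obtain ⟨θh, hθh, hzero, hpos, hneg⟩ := exists_single_crossing_of_hasDerivAt hθ
    (continuousOn_tailGap hf (fun t ht => (hb t ht).continuousAt.continuousWithinAt) hθ.le)
    hψ hψ_anti (fun t ht => hk t (Ioo_subset_Icc_self ht)) hφ' hφl integral_same hψu
  refine ⟨hφl, integral_same, ⟨θu - θh, sub_pos.2 hθh.2, fun t ht => hneg t ⟨?_, ht.2⟩⟩,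
    θh, hθh, hzero, hpos, hneg, fun t ht h0 => ?_⟩
  · linarith [ht.1]
  · rcases lt_trichotomy t θh with h | h | h
    · exact absurd h0 (hpos t ⟨ht.1.le, h⟩).ne'
    · exact h
    · exact absurd h0 (hneg t ⟨h, ht.2⟩).ne

/-- The function `φ(t) = ∫_t^{θ̄} (θ − t − b(t)) f(θ) dθ` is positive at `θ̲`, zero at `θ̄`,
negative just below `θ̄`, and strictly single-crossing from above with a unique zero `θ̂`. -/
theorem stmt_5 (θl θu : ℝ) (hθ : θl < θu)
    (f b b' B g : ℝ → ℝ)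
    (hf : ContinuousOn f (Icc θl θu)) (hfpos : ∀ θ ∈ Icc θl θu, 0 < f θ)
    (hfdens : (∫ θ in θl..θu, f θ) = 1)
    (hb : ∀ θ ∈ Icc θl θu, HasDerivAt b (b' θ) θ)
    (hb'cont : ContinuousOn b' (Icc θl θu))
    (hb' : ∀ θ ∈ Icc θl θu, -1 < b' θ)
    (hB : ∀ θ ∈ Icc θl θu, B θ = b θ / (1 + b' θ))
    (hg : ∀ θ ∈ Icc θl θu, HasDerivAt (fun t => B t * f t) (g θ) θ)
    (hA1 : ∀ θ ∈ Icc θl θu, 0 < f θ + g θ)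
    (hA2 : 0 < b θu)
    (hA3 : θl + b θl < ∫ θ in θl..θu, θ * f θ) :
    (0 < ∫ θ in θl..θu, (θ - θl - b θl) * f θ) ∧
    ((∫ θ in θu..θu, (θ - θu - b θu) * f θ) = 0) ∧
    (∃ ε > 0, ∀ t ∈ Ioo (θu - ε) θu, (∫ θ in t..θu, (θ - t - b t) * f θ) < 0) ∧
    (∃ θh ∈ Ioo θl θu, (∫ θ in θh..θu, (θ - θh - b θh) * f θ) = 0 ∧
      (∀ t ∈ Ico θl θh, 0 < ∫ θ in t..θu, (θ - t - b t) * f θ) ∧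
      (∀ t ∈ Ioo θh θu, (∫ θ in t..θu, (θ - t - b t) * f θ) < 0) ∧
      (∀ t ∈ Ioo θl θu, (∫ θ in t..θu, (θ - t - b t) * f θ) = 0 → t = θh)) :=
  stmt_5_general θl θu hθ f b b' B g hf hfpos hfdens hb hb' hB hg hA1 hA2 hA3
end

section
/- Fix decisions y₀ < y₁ with E[u_A(y₀,θ)] = E[u_A(y₁,θ)], where θ_A satisfies θ_A + b(θ_A) = E[θ+b(θ)]. Suppose the agent, when informed of state θ, chooses y₁ over y₀ exactly when θ ≥ θ_A. Then the change in the principal's informed-agent payoff from adding decision y₁, namely E[(u_P(y₁,θ) − u_P(y₀,θ))·1{θ ≥ θ_A}], equals (E[θ | θ ≥ θ_A] − θ_A − b(θ_A))·(y₁ − y₀)·(1 − F(θ_A)), and this is nonnegative if and only if E[θ | θ ≥ θ_A] ≥ θ_A + b(θ_A). -/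
open Set MeasureTheory

/-!
Since `y₁` is chosen exactly on `{θ ≥ θ_A}` and `a(y₁) − a(y₀) = −(θ_A + b(θ_A))(y₁ − y₀)`,
the payoff difference `θ(y₁ − y₀) + a(y₁) − a(y₀)` is affine in `θ`, so its integral over
`{θ ≥ θ_A}` is `(∫_{θ ≥ θ_A} θ − (θ_A + b(θ_A)) F̄(θ_A))(y₁ − y₀)`, where `F̄(θ_A) = μ{θ ≥ θ_A}`.
Factoring out `F̄(θ_A) > 0` gives the formula, and the sign is that of the first factor
because `y₁ > y₀`.
-/

theorem setIntegral_mul_const_add_const {α : Type*} [MeasurableSpace α] {μ : Measure α}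
    {s : Set α} {f : α → ℝ} (hs : μ s ≠ ⊤) (hf : IntegrableOn f s μ) (c d : ℝ) :
    ∫ x in s, (f x * c + d) ∂μ = (∫ x in s, f x ∂μ) * c + μ.real s * d := by
  rw [integral_add (hf.mul_const c) (integrableOn_const hs), integral_mul_const,
    setIntegral_const, smul_eq_mul]

theorem sub_mul_mul_eq_div_sub_mul_mul {I M t : ℝ} (hM : M ≠ 0) (y : ℝ) :
    (I - t * M) * y = (I / M - t) * y * M := by
  field_simp

theorem mul_sub_mul_nonneg_iff_le_div {I M t y : ℝ} (hM : 0 < M) (hy : 0 < y) :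
    0 ≤ (I - t * M) * y ↔ t ≤ I / M := by
  rw [mul_nonneg_iff_of_pos_right hy, le_div_iff₀ hM, sub_nonneg]

theorem stmt_10_general (a b : ℝ → ℝ)
    (μ : Measure ℝ)
    (hidint : Integrable (fun θ => θ) μ)
    (θA : ℝ)
    (hmass : 0 < (μ (Ici θA)).toReal)
    (y0 y1 : ℝ) (hlt : y0 < y1)
    (hconj : a y1 - a y0 = -(θA + b θA) * (y1 - y0)) :
    (∫ θ in Ici θA, ((θ * y1 + a y1) - (θ * y0 + a y0)) ∂μ)
      = ((∫ θ in Ici θA, θ ∂μ) / (μ (Ici θA)).toReal - θA - b θA)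
        * (y1 - y0) * (μ (Ici θA)).toReal ∧
    (0 ≤ (∫ θ in Ici θA, ((θ * y1 + a y1) - (θ * y0 + a y0)) ∂μ)
      ↔ θA + b θA ≤ (∫ θ in Ici θA, θ ∂μ) / (μ (Ici θA)).toReal) := by
  have hfinite : μ (Ici θA) ≠ ⊤ := (ENNReal.toReal_pos_iff.mp hmass).2.ne
  have hgain : ∫ θ in Ici θA, ((θ * y1 + a y1) - (θ * y0 + a y0)) ∂μ
      = ((∫ θ in Ici θA, θ ∂μ) - (θA + b θA) * (μ (Ici θA)).toReal) * (y1 - y0) := by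
    have hdiff : ∀ θ : ℝ, (θ * y1 + a y1) - (θ * y0 + a y0)
        = θ * (y1 - y0) + (a y1 - a y0) := fun θ => by ring
    simp_rw [hdiff, setIntegral_mul_const_add_const hfinite hidint.integrableOn, hconj,
      measureReal_def]
    ring
  rw [hgain, mul_sub_mul_nonneg_iff_le_div hmass (sub_pos.mpr hlt),
    sub_mul_mul_eq_div_sub_mul_mul hmass.ne', sub_sub]
  exact ⟨rfl, Iff.rfl⟩

/-- Adding an ex-ante-indifferent decision `y₁` above `y₀`: the change in the principal's
informed-agent payoff equals `(E[θ | θ ≥ θ_A] − θ_A − b(θ_A))·(y₁ − y₀)·(1 − F(θ_A))`, and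
is nonnegative iff `E[θ | θ ≥ θ_A] ≥ θ_A + b(θ_A)`. -/
theorem stmt_10 (a b : ℝ → ℝ)
    (μ : Measure ℝ) [IsProbabilityMeasure μ]
    (hbint : Integrable (fun θ => θ + b θ) μ)
    (hidint : Integrable (fun θ => θ) μ)
    (θA : ℝ) (hθA : θA + b θA = ∫ θ, (θ + b θ) ∂μ)
    (hmass : 0 < (μ (Ici θA)).toReal)
    (y0 y1 : ℝ) (hlt : y0 < y1)
    (hconj : a y1 - a y0 = -(θA + b θA) * (y1 - y0)) :
    (∫ θ in Ici θA, ((θ * y1 + a y1) - (θ * y0 + a y0)) ∂μ)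
      = ((∫ θ in Ici θA, θ ∂μ) / (μ (Ici θA)).toReal - θA - b θA)
        * (y1 - y0) * (μ (Ici θA)).toReal ∧
    (0 ≤ (∫ θ in Ici θA, ((θ * y1 + a y1) - (θ * y0 + a y0)) ∂μ)
      ↔ θA + b θA ≤ (∫ θ in Ici θA, θ ∂μ) / (μ (Ici θA)).toReal) :=
  stmt_10_general a b μ hidint θA hmass y0 y1 hlt hconj
end

section
/- Envelope integration: Let D ⊆ ℝ be a nonempty compact set, u_A(y,θ) = (θ+b(θ))y + a(y) with b continuously differentiable, and define v(θ) = max_{y∈D} u_A(y,θ) and y_A(D,θ) any measurable selection of the argmax. Then for all θ ∈ [θ̲,θ̄], v(θ) − v(θ̲) = ∫_{θ̲}^{θ} (1 + b'(ξ))·y_A(D,ξ) dξ. -/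
/-!
Write `t θ = θ + b θ` and `V θ = max_{y ∈ D} (t θ * y + a y)`. Comparing the maximizers at two
types gives the supporting inequalities
`(t η - t ξ) * y_A ξ ≤ V η - V ξ ≤ (t η - t ξ) * y_A η`,
so `V` is Lipschitz (as `t` is `C¹` and `D` is bounded), hence absolutely continuous, and
`V θ - V θ̲ = ∫ V'`. At an interior point `x` where `V` is differentiable,
`η ↦ V η - t η * y_A x` is minimal at `x`, so `V' x = t' x * y_A x`.
-/

open Set Filter Topology MeasureTheory
open scoped NNReal

theorem csSup_image_eq_of_forall_le {α β : Type*} [ConditionallyCompleteLattice β]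
    {f : α → β} {D : Set α} {y₀ : α} (h₀ : y₀ ∈ D) (hmax : ∀ y ∈ D, f y ≤ f y₀) :
    sSup (f '' D) = f y₀ :=
  IsGreatest.csSup_eq ⟨mem_image_of_mem f h₀, forall_mem_image.2 hmax⟩

section Envelope

variable {V t y : ℝ → ℝ}

theorem HasDerivAt.eq_mul_of_eventually_supporting {V' t' c x : ℝ} (hV : HasDerivAt V V' x)
    (ht : HasDerivAt t t' x) (hsupp : ∀ᶠ η in 𝓝 x, (t η - t x) * c ≤ V η - V x) :
    V' = t' * c := by
  have hmin : IsLocalMin (fun η => V η - t η * c) x :=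
    hsupp.mono fun η hη => by linarith
  linarith [hmin.hasDerivAt_eq_zero (hV.sub (ht.mul_const c))]

theorem LipschitzOnWith.of_supporting {s : Set ℝ} {K M : ℝ≥0} (ht : LipschitzOnWith K t s)
    (hy : ∀ ξ ∈ s, |y ξ| ≤ M) (hsupp : ∀ ξ ∈ s, ∀ η ∈ s, (t η - t ξ) * y ξ ≤ V η - V ξ) :
    LipschitzOnWith (M * K) V s := by
  refine LipschitzOnWith.of_dist_le_mul fun ξ hξ η hη => ?_
  have htK : M * |t ξ - t η| ≤ M * (K * |ξ - η|) := by
    gcongr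
    simpa only [Real.dist_eq] using ht.dist_le_mul ξ hξ η hη
  have hbound : ∀ ζ ∈ s, |(t ξ - t η) * y ζ| ≤ M * |t ξ - t η| := fun ζ hζ => by
    rw [abs_mul, mul_comm]
    exact mul_le_mul_of_nonneg_right (hy ζ hζ) (abs_nonneg _)
  have hupper := hsupp η hη ξ hξ
  have hlower := hsupp ξ hξ η hη
  have hη' := abs_le.1 (hbound η hη)
  have hξ' := abs_le.1 (hbound ξ hξ)
  rw [Real.dist_eq, Real.dist_eq, NNReal.coe_mul, abs_le]
  constructor <;> linarith

theorem sub_eq_integral_of_supporting {θl θu θ : ℝ} {t' : ℝ → ℝ} {M : ℝ≥0}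
    (ht : ∀ x ∈ Icc θl θu, HasDerivAt t (t' x) x) (ht' : ContinuousOn t' (Icc θl θu))
    (hy : ∀ ξ ∈ Icc θl θu, |y ξ| ≤ M)
    (hsupp : ∀ ξ ∈ Icc θl θu, ∀ η ∈ Icc θl θu, (t η - t ξ) * y ξ ≤ V η - V ξ)
    (hθ : θ ∈ Icc θl θu) :
    V θ - V θl = ∫ ξ in θl..θ, t' ξ * y ξ := by
  obtain ⟨K, hK⟩ := isCompact_Icc.exists_bound_of_continuousOn ht'
  have htLip : LipschitzOnWith K.toNNReal t (Icc θl θu) :=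
    (convex_Icc θl θu).lipschitzOnWith_of_nnnorm_hasDerivWithin_le
      (fun x hx => (ht x hx).hasDerivWithinAt)
      (fun x hx => by simpa [← NNReal.coe_le_coe] using (hK x hx).trans K.le_coe_toNNReal)
  have hsub : uIcc θl θ ⊆ Icc θl θu := by
    rw [uIcc_of_le hθ.1]
    exact Icc_subset_Icc_right hθ.2
  have hVac : AbsolutelyContinuousOnInterval V θl θ :=
    ((htLip.of_supporting hy hsupp).mono hsub).absolutelyContinuousOnInterval
  rw [← hVac.integral_deriv_eq_sub]
  refine intervalIntegral.integral_congr_ae ?_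
  filter_upwards [hVac.ae_differentiableAt, Measure.ae_ne volume θ] with x hdiff hxθ hx
  have hV := (hdiff (uIoc_subset_uIcc hx)).hasDerivAt
  rw [uIoc_of_le hθ.1] at hx
  have hxIoo : x ∈ Ioo θl θu := ⟨hx.1, (lt_of_le_of_ne hx.2 hxθ).trans_le hθ.2⟩
  have hxIcc : x ∈ Icc θl θu := Ioo_subset_Icc_self hxIoo
  exact hV.eq_mul_of_eventually_supporting (ht x hxIcc)
    (eventually_of_mem (Icc_mem_nhds hxIoo.1 hxIoo.2) (hsupp x hxIcc))

end Envelope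

theorem stmt_11_general (θl θu : ℝ) (a b b' : ℝ → ℝ)
    (hb : ∀ θ ∈ Icc θl θu, HasDerivAt b (b' θ) θ)
    (hb'cont : ContinuousOn b' (Icc θl θu))
    (D : Set ℝ) (hDc : IsCompact D)
    (yAD : ℝ → ℝ)
    (hsel : ∀ θ ∈ Icc θl θu, yAD θ ∈ D ∧
      ∀ y ∈ D, (θ + b θ) * y + a y ≤ (θ + b θ) * yAD θ + a (yAD θ)) :
    ∀ θ ∈ Icc θl θu,
      sSup ((fun y => (θ + b θ) * y + a y) '' D)
        - sSup ((fun y => (θl + b θl) * y + a y) '' D)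
        = ∫ ξ in θl..θ, (1 + b' ξ) * yAD ξ := by
  intro θ hθ
  obtain ⟨C, hC⟩ := hDc.isBounded.exists_norm_le
  have hvalue : ∀ ξ ∈ Icc θl θu, sSup ((fun y => (ξ + b ξ) * y + a y) '' D)
      = (ξ + b ξ) * yAD ξ + a (yAD ξ) := fun ξ hξ =>
    csSup_image_eq_of_forall_le (hsel ξ hξ).1 (hsel ξ hξ).2
  refine sub_eq_integral_of_supporting (V := fun ξ => sSup ((fun y => (ξ + b ξ) * y + a y) '' D))
    (t := fun ξ => ξ + b ξ) (M := C.toNNReal)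
    (fun x hx => (hasDerivAt_id x).add (hb x hx)) (continuousOn_const.add hb'cont)
    (fun ξ hξ => (hC _ (hsel ξ hξ).1).trans C.le_coe_toNNReal) (fun ξ hξ η hη => ?_) hθ
  rw [hvalue ξ hξ, hvalue η hη]
  linarith [(hsel η hη).2 _ (hsel ξ hξ).1]

/-- Envelope integration: the agent's value function from a compact delegation set satisfies
`v(θ) − v(θ̲) = ∫_{θ̲}^{θ} (1 + b'(ξ))·y_A(D,ξ) dξ`. -/
theorem stmt_11 (θl θu : ℝ) (hθ : θl ≤ θu) (a b b' : ℝ → ℝ)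
    (ha : Continuous a)
    (hb : ∀ θ ∈ Icc θl θu, HasDerivAt b (b' θ) θ)
    (hb'cont : ContinuousOn b' (Icc θl θu))
    (D : Set ℝ) (hD : D.Nonempty) (hDc : IsCompact D)
    (yAD : ℝ → ℝ) (hmeas : Measurable yAD)
    (hsel : ∀ θ ∈ Icc θl θu, yAD θ ∈ D ∧
      ∀ y ∈ D, (θ + b θ) * y + a y ≤ (θ + b θ) * yAD θ + a (yAD θ)) :
    ∀ θ ∈ Icc θl θu,
      sSup ((fun y => (θ + b θ) * y + a y) '' D)
        - sSup ((fun y => (θl + b θl) * y + a y) '' D)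
        = ∫ ξ in θl..θ, (1 + b' ξ) * yAD ξ :=
  stmt_11_general θl θu a b b' hb hb'cont D hDc yAD hsel
end

section
/- Utility representation: For any compact delegation set D, with u_A(D,θ) = max_{y∈D} u_A(y,θ) and y_A(D,θ) the (a.e.-unique) maximizer, the principal's informed-agent payoff u_{P,1}(D) = ∫ u_P(y_A(D,θ),θ) f(θ)dθ satisfies u_{P,1}(D) = u_A(D,θ̲)B(θ̲)f(θ̲) − u_A(D,θ̄)B(θ̄)f(θ̄) + ∫_{θ̲}^{θ̄} u_A(D,θ)[f(θ) + (B(θ)f(θ))'] dθ. -/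
/-!
Put `h θ = θ + b θ`, so that `u_A(y, θ) = h θ * y + a y`, and `V θ = u_A(D, θ)`. Comparing the
optimal choices at `s` and at `t` gives the sandwich
`(h t - h s) * y_A(D, s) ≤ V t - V s ≤ (h t - h s) * y_A(D, t)`.
As `h` is strictly increasing, `y_A(D, ·)` is monotone, hence bounded, integrable and continuous off
a countable set. The sandwich makes `V` continuous, and differentiable with `V' = h' * y_A(D, ·)` at
every continuity point of `y_A(D, ·)` (envelope theorem). Integrating
`(B f V)' = (B f)' V + b f y_A(D, ·)` (as `B h' = b`) off that countable set and substituting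
`u_P(y_A(D, θ), θ) = V θ - b θ * y_A(D, θ)` gives the formula.
-/

open Set Filter Topology Asymptotics MeasureTheory

section Sandwich

variable {S : Set ℝ} {h V y : ℝ → ℝ}

theorem monotoneOn_of_forall_sub_mul_le (hh : StrictMonoOn h S)
    (hsand : ∀ s ∈ S, ∀ t ∈ S, (h t - h s) * y s ≤ V t - V s) : MonotoneOn y S := by
  intro s hs t ht hst
  rcases hst.eq_or_lt with rfl | hlt
  · exact le_rfl
  · have := hsand s hs t ht
    have := hsand t ht s hs
    nlinarith [hh hs ht hlt]

theorem abs_sub_le_mul_of_forall_sub_mul_le {C : ℝ} (hy : ∀ s ∈ S, |y s| ≤ C)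
    (hsand : ∀ s ∈ S, ∀ t ∈ S, (h t - h s) * y s ≤ V t - V s) {s t : ℝ} (hs : s ∈ S)
    (ht : t ∈ S) : |V t - V s| ≤ C * |h t - h s| := by
  have := hsand s hs t ht
  have := hsand t ht s hs
  have := abs_le.1 (hy s hs)
  have := abs_le.1 (hy t ht)
  rw [abs_le]
  rcases abs_choice (h t - h s) with hc | hc <;> rw [hc] <;> constructor <;>
    nlinarith [abs_nonneg (h t - h s)]

theorem continuousOn_of_forall_sub_mul_le {C : ℝ} (hh : ContinuousOn h S)
    (hy : ∀ s ∈ S, |y s| ≤ C) (hsand : ∀ s ∈ S, ∀ t ∈ S, (h t - h s) * y s ≤ V t - V s) :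
    ContinuousOn V S := by
  intro x hx
  rw [ContinuousWithinAt, tendsto_iff_norm_sub_tendsto_zero]
  have hlim : Tendsto (fun t => C * ‖h t - h x‖) (𝓝[S] x) (𝓝 0) := by
    simpa using (tendsto_iff_norm_sub_tendsto_zero.1 (hh x hx)).const_mul C
  refine squeeze_zero' (Eventually.of_forall fun _ => norm_nonneg _) ?_ hlim
  filter_upwards [self_mem_nhdsWithin] with t ht
  exact abs_sub_le_mul_of_forall_sub_mul_le hy hsand hx ht

/-- Envelope theorem: the increment of `V - h * y x` from `x` to `t` lies between `0` and
`(h t - h x) * (y t - y x)`, which is `o(t - x)` since `y` is continuous at `x`. -/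
theorem hasDerivAt_of_forall_sub_mul_le {x h' : ℝ} (hS : S ∈ 𝓝 x) (hh : HasDerivAt h h' x)
    (hy : ContinuousAt y x) (hsand : ∀ s ∈ S, ∀ t ∈ S, (h t - h s) * y s ≤ V t - V s) :
    HasDerivAt V (h' * y x) x := by
  have hx : x ∈ S := mem_of_mem_nhds hS
  set r : ℝ → ℝ := fun t => V t - h t * y x
  have hrbound : ∀ᶠ t in 𝓝 x, ‖r t - r x‖ ≤ 1 * ‖(h t - h x) * (y t - y x)‖ := by
    filter_upwards [hS] with t ht
    have h1 := hsand x hx t ht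
    have h2 := hsand t ht x hx
    rw [one_mul, Real.norm_eq_abs, Real.norm_eq_abs, abs_of_nonneg (by simp only [r]; linarith)]
    calc r t - r x ≤ (h t - h x) * (y t - y x) := by simp only [r]; linarith
      _ ≤ |(h t - h x) * (y t - y x)| := le_abs_self _
  have hsmall : (fun t => (h t - h x) * (y t - y x)) =o[𝓝 x] fun t => (t - x) * 1 :=
    hh.isBigO_sub.mul_isLittleO
      (isLittleO_one_iff ℝ |>.2 (tendsto_sub_nhds_zero_iff.2 hy.tendsto))
  have hr : HasDerivAt r 0 x := by
    rw [hasDerivAt_iff_isLittleO]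
    simpa using (IsBigO.of_bound 1 hrbound).trans_isLittleO hsmall
  refine (zero_add (h' * y x) ▸ hr.add (hh.mul_const (y x))).congr_of_eventuallyEq ?_
  exact Eventually.of_forall fun t => (sub_add_cancel (V t) (h t * y x)).symm

end Sandwich

theorem strictMonoOn_Icc_of_hasDerivAt_pos {l u : ℝ} {h h' : ℝ → ℝ}
    (hh : ∀ x ∈ Icc l u, HasDerivAt h (h' x) x) (hpos : ∀ x ∈ Ioo l u, 0 < h' x) :
    StrictMonoOn h (Icc l u) := by
  refine strictMonoOn_of_deriv_pos (convex_Icc l u) (HasDerivAt.continuousOn hh) fun x hx => ?_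
  rw [interior_Icc] at hx
  rw [(hh x (Ioo_subset_Icc_self hx)).deriv]
  exact hpos x hx

theorem continuousOn_Icc_of_forall_sub_mul_le {l u : ℝ} {h V y : ℝ → ℝ} (hlu : l ≤ u)
    (hh : ContinuousOn h (Icc l u)) (hy : MonotoneOn y (Icc l u))
    (hsand : ∀ s ∈ Icc l u, ∀ t ∈ Icc l u, (h t - h s) * y s ≤ V t - V s) :
    ContinuousOn V (Icc l u) :=
  continuousOn_of_forall_sub_mul_le hh (fun _ hx =>
    abs_le_max_abs_abs (hy ⟨le_rfl, hlu⟩ hx hx.1) (hy hx ⟨hlu, le_rfl⟩ hx.2)) hsand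

theorem integral_mul_add_mul_eq_sub_of_forall_sub_mul_le {l u : ℝ} (hlu : l ≤ u)
    {h h' V y w w' k : ℝ → ℝ} (hh : ∀ x ∈ Icc l u, HasDerivAt h (h' x) x)
    (hy : MonotoneOn y (Icc l u)) (hV : ContinuousOn V (Icc l u))
    (hsand : ∀ s ∈ Icc l u, ∀ t ∈ Icc l u, (h t - h s) * y s ≤ V t - V s)
    (hw : ∀ x ∈ Icc l u, HasDerivAt w (w' x) x) (hw' : ContinuousOn w' (Icc l u))
    (hk : ContinuousOn k (Icc l u)) (hwk : ∀ x ∈ Icc l u, w x * h' x = k x) :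
    ∫ x in l..u, (w' x * V x + k x * y x) = w u * V u - w l * V l := by
  refine integral_eq_of_hasDerivAt_off_countable_of_le (fun x => w x * V x) _ hlu
    hy.countable_not_continuousWithinAt ((HasDerivAt.continuousOn hw).mul hV) ?_ ?_
  · rintro x ⟨hx, hxs⟩
    have hxI := Ioo_subset_Icc_self hx
    have hIcc : Icc l u ∈ 𝓝 x := Icc_mem_nhds hx.1 hx.2
    have hyc : ContinuousAt y x := by
      by_contra hnc
      exact hxs ⟨hxI, fun hc => hnc (hc.continuousAt hIcc)⟩
    have hVx := hasDerivAt_of_forall_sub_mul_le hIcc (hh x hxI) hyc hsand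
    refine ((hw x hxI).mul hVx).congr_deriv ?_
    rw [← hwk x hxI]
    ring
  · rw [← uIcc_of_le hlu] at hw' hV hk hy
    exact (hw'.mul hV).intervalIntegrable.add (hy.intervalIntegrable.continuousOn_mul hk)

theorem csSup_image_eq_of_isMaxOn {α β : Type*} [ConditionallyCompleteLattice β] {φ : α → β}
    {D : Set α} {x : α} (hx : x ∈ D) (hmax : IsMaxOn φ D x) : sSup (φ '' D) = φ x :=
  IsGreatest.csSup_eq ⟨mem_image_of_mem φ hx, forall_mem_image.2 (isMaxOn_iff.1 hmax)⟩

section Value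

variable {S D : Set ℝ} {h a yA : ℝ → ℝ}

theorem sSup_image_eq_of_forall_le
    (hsel : ∀ θ ∈ S, yA θ ∈ D ∧ ∀ y ∈ D, h θ * y + a y ≤ h θ * yA θ + a (yA θ))
    {θ : ℝ} (hθ : θ ∈ S) : sSup ((fun y => h θ * y + a y) '' D) = h θ * yA θ + a (yA θ) :=
  csSup_image_eq_of_isMaxOn (hsel θ hθ).1 (isMaxOn_iff.2 (hsel θ hθ).2)

theorem sub_mul_le_sSup_sub_sSup
    (hsel : ∀ θ ∈ S, yA θ ∈ D ∧ ∀ y ∈ D, h θ * y + a y ≤ h θ * yA θ + a (yA θ))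
    {s t : ℝ} (hs : s ∈ S) (ht : t ∈ S) :
    (h t - h s) * yA s
      ≤ sSup ((fun y => h t * y + a y) '' D) - sSup ((fun y => h s * y + a y) '' D) := by
  rw [sSup_image_eq_of_forall_le hsel hs, sSup_image_eq_of_forall_le hsel ht]
  linarith [(hsel t ht).2 (yA s) (hsel s hs).1]

end Value

theorem stmt_12_general (θl θu : ℝ) (hθ : θl < θu) (a b b' f f' B g : ℝ → ℝ)
    (hb : ∀ θ ∈ Icc θl θu, HasDerivAt b (b' θ) θ)
    (hb' : ∀ θ ∈ Icc θl θu, -1 < b' θ)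
    (hB : ∀ θ ∈ Icc θl θu, B θ = b θ / (1 + b' θ))
    (hf : ∀ θ ∈ Icc θl θu, HasDerivAt f (f' θ) θ)
    (hg : ∀ θ ∈ Icc θl θu, HasDerivAt (fun t => B t * f t) (g θ) θ)
    (hgcont : ContinuousOn g (Icc θl θu))
    (D : Set ℝ)
    (yAD : ℝ → ℝ)
    (hsel : ∀ θ ∈ Icc θl θu, yAD θ ∈ D ∧
      ∀ y ∈ D, (θ + b θ) * y + a y ≤ (θ + b θ) * yAD θ + a (yAD θ)) :
    (∫ θ in θl..θu, (θ * yAD θ + a (yAD θ)) * f θ)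
      = (sSup ((fun y => (θl + b θl) * y + a y) '' D)) * B θl * f θl
        - (sSup ((fun y => (θu + b θu) * y + a y) '' D)) * B θu * f θu
        + ∫ θ in θl..θu, (sSup ((fun y => (θ + b θ) * y + a y) '' D)) * (f θ + g θ) := by
  set V : ℝ → ℝ := fun θ => sSup ((fun y => (θ + b θ) * y + a y) '' D)
  have hsand : ∀ s ∈ Icc θl θu, ∀ t ∈ Icc θl θu, ((t + b t) - (s + b s)) * yAD s ≤ V t - V s :=
    fun s hs t ht => sub_mul_le_sSup_sub_sSup (h := fun t => t + b t) hsel hs ht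
  have hh (t) (ht : t ∈ Icc θl θu) : HasDerivAt (fun t => t + b t) (1 + b' t) t :=
    (hasDerivAt_id t).add (hb t ht)
  have hy : MonotoneOn yAD (Icc θl θu) := monotoneOn_of_forall_sub_mul_le
    (strictMonoOn_Icc_of_hasDerivAt_pos hh fun t ht => by linarith [hb' t (Ioo_subset_Icc_self ht)])
    hsand
  have hVc : ContinuousOn V (Icc θl θu) :=
    continuousOn_Icc_of_forall_sub_mul_le hθ.le (HasDerivAt.continuousOn hh) hy hsand
  have hbf : ContinuousOn (fun θ => b θ * f θ) (Icc θl θu) :=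
    (HasDerivAt.continuousOn hb).mul (HasDerivAt.continuousOn hf)
  have hBh : ∀ t ∈ Icc θl θu, B t * f t * (1 + b' t) = b t * f t := fun t ht => by
    rw [hB t ht]
    field_simp [show 1 + b' t ≠ 0 by linarith [hb' t ht]]
  have hparts := integral_mul_add_mul_eq_sub_of_forall_sub_mul_le hθ.le hh hy hVc hsand hg hgcont
    hbf hBh
  have hI : uIcc θl θu = Icc θl θu := uIcc_of_le hθ.le
  have hVfg : IntervalIntegrable (fun θ => V θ * (f θ + g θ)) volume θl θu :=
    (hVc.mul ((HasDerivAt.continuousOn hf).add hgcont)).intervalIntegrable_of_Icc hθ.le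
  have hgVbfy : IntervalIntegrable (fun θ => g θ * V θ + b θ * f θ * yAD θ) volume θl θu :=
    ((hgcont.mul hVc).intervalIntegrable_of_Icc hθ.le).add
      ((hI ▸ hy).intervalIntegrable.continuousOn_mul (hI ▸ hbf))
  calc (∫ θ in θl..θu, (θ * yAD θ + a (yAD θ)) * f θ)
      = (∫ θ in θl..θu, V θ * (f θ + g θ)) - ∫ θ in θl..θu, (g θ * V θ + b θ * f θ * yAD θ) := by
        rw [← intervalIntegral.integral_sub hVfg hgVbfy]
        refine intervalIntegral.integral_congr fun t ht => ?_
        have hVt : V t = (t + b t) * yAD t + a (yAD t) :=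
          sSup_image_eq_of_forall_le (h := fun t => t + b t) hsel (hI ▸ ht)
        rw [hVt]
        ring
    _ = _ := by
      rw [hparts]
      ring

/-- Utility representation: the principal's informed-agent payoff is a weighted combination
of the agent's value function, with boundary terms `u_A(D,θ̲)B(θ̲)f(θ̲) − u_A(D,θ̄)B(θ̄)f(θ̄)`
and integral weight `f(θ) + (B(θ)f(θ))'`. -/
theorem stmt_12 (θl θu : ℝ) (hθ : θl < θu) (a b b' f f' B g : ℝ → ℝ)
    (ha : Continuous a)
    (hb : ∀ θ ∈ Icc θl θu, HasDerivAt b (b' θ) θ)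
    (hb'cont : ContinuousOn b' (Icc θl θu))
    (hb' : ∀ θ ∈ Icc θl θu, -1 < b' θ)
    (hB : ∀ θ ∈ Icc θl θu, B θ = b θ / (1 + b' θ))
    (hf : ∀ θ ∈ Icc θl θu, HasDerivAt f (f' θ) θ)
    (hf'cont : ContinuousOn f' (Icc θl θu))
    (hfpos : ∀ θ ∈ Icc θl θu, 0 < f θ)
    (hfdens : (∫ θ in θl..θu, f θ) = 1)
    (hg : ∀ θ ∈ Icc θl θu, HasDerivAt (fun t => B t * f t) (g θ) θ)
    (hgcont : ContinuousOn g (Icc θl θu))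
    (D : Set ℝ) (hD : D.Nonempty) (hDc : IsCompact D)
    (yAD : ℝ → ℝ) (hmeas : Measurable yAD)
    (hsel : ∀ θ ∈ Icc θl θu, yAD θ ∈ D ∧
      ∀ y ∈ D, (θ + b θ) * y + a y ≤ (θ + b θ) * yAD θ + a (yAD θ)) :
    (∫ θ in θl..θu, (θ * yAD θ + a (yAD θ)) * f θ)
      = (sSup ((fun y => (θl + b θl) * y + a y) '' D)) * B θl * f θl
        - (sSup ((fun y => (θu + b θu) * y + a y) '' D)) * B θu * f θu
        + ∫ θ in θl..θu, (sSup ((fun y => (θ + b θ) * y + a y) '' D)) * (f θ + g θ) :=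
  stmt_12_general θl θu hθ a b b' f f' B g hb hb' hB hf hg hgcont D yAD hsel
end

section
/- Let g : (0,∞) → ℝ be twice differentiable with g > 0, g' > 0, and suppose −g''(x)/g'(x) ≥ α for all x > 0, where α > 0. Define h(x) = g(x)/g'(x). If additionally h(x) → 0 as x → 0⁺, then h(x) ≥ (e^{αx} − 1)/α for all x > 0. -/
open Set Filter Topology Real

/-! The quotient `h = g/g'` satisfies `h' = 1 - g g''/g'^2 ≥ 1 + α h`. Multiplying by the
integrating factor `e^{-αy}` makes `(h + 1/α) e^{-αy}` nondecreasing on `(0, ∞)`; its limit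
at `0⁺` is `1/α`, which gives `h x + 1/α ≥ e^{αx}/α`. -/

theorem hasDerivAt_div_deriv {g g' : ℝ → ℝ} {x g'' : ℝ} (hg : HasDerivAt g (g' x) x)
    (hg' : HasDerivAt g' g'' x) (hne : g' x ≠ 0) :
    HasDerivAt (fun y => g y / g' y) (1 - g x * g'' / g' x ^ 2) x :=
  (hg.div hg' hne).congr_deriv (by field_simp)

theorem one_add_mul_div_le_of_le_neg_div {α a b c : ℝ} (ha : 0 ≤ a) (hb : 0 < b)
    (hc : α ≤ -c / b) : 1 + α * (a / b) ≤ 1 - a * c / b ^ 2 := by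
  have hαb : α * a * b ≤ -(a * c) := by
    rw [le_div_iff₀ hb] at hc
    nlinarith
  have hgap : 1 - a * c / b ^ 2 - (1 + α * (a / b)) = (-(a * c) - α * a * b) / b ^ 2 := by
    field_simp
    ring
  have hgap_nonneg : 0 ≤ (-(a * c) - α * a * b) / b ^ 2 :=
    div_nonneg (by linarith) (sq_nonneg b)
  linarith

section IntegratingFactor

variable {h h' : ℝ → ℝ} {α : ℝ}

theorem monotoneOn_add_inv_mul_exp (hα : α ≠ 0)
    (hderiv : ∀ x, 0 < x → HasDerivAt h (h' x) x)
    (hineq : ∀ x, 0 < x → 1 + α * h x ≤ h' x) :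
    MonotoneOn (fun y => (h y + α⁻¹) * exp (-(α * y))) (Ioi 0) := by
  have hF : ∀ y, 0 < y → HasDerivAt (fun y => (h y + α⁻¹) * exp (-(α * y)))
      ((h' y - (1 + α * h y)) * exp (-(α * y))) y := by
    intro y hy
    have hexp : HasDerivAt (fun y => exp (-(α * y))) (exp (-(α * y)) * -α) y := by
      simpa using ((hasDerivAt_id y).const_mul α).neg.exp
    exact (((hderiv y hy).add_const α⁻¹).mul hexp).congr_deriv (by field_simp; ring)
  refine monotoneOn_of_hasDerivWithinAt_nonneg (convex_Ioi 0)
    (f' := fun y => (h' y - (1 + α * h y)) * exp (-(α * y)))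
    (fun y hy => (hF y hy).continuousAt.continuousWithinAt) (fun y hy => ?_) (fun y hy => ?_)
  · rw [interior_Ioi] at hy ⊢
    exact (hF y hy).hasDerivWithinAt
  · rw [interior_Ioi] at hy
    exact mul_nonneg (sub_nonneg.2 (hineq y hy)) (exp_pos _).le

theorem exp_sub_one_div_le_of_one_add_mul_le_deriv (hα : α ≠ 0)
    (hderiv : ∀ x, 0 < x → HasDerivAt h (h' x) x)
    (hineq : ∀ x, 0 < x → 1 + α * h x ≤ h' x)
    (hlim : Tendsto h (𝓝[>] 0) (𝓝 0)) {x : ℝ} (hx : 0 < x) :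
    (exp (α * x) - 1) / α ≤ h x := by
  have hmono := monotoneOn_add_inv_mul_exp hα hderiv hineq
  have hFlim : Tendsto (fun y => (h y + α⁻¹) * exp (-(α * y))) (𝓝[>] 0) (𝓝 α⁻¹) := by
    have hexp : Tendsto (fun y => exp (-(α * y))) (𝓝[>] 0) (𝓝 1) := by
      simpa using ((continuous_const.mul continuous_id).neg.rexp.tendsto 0).mono_left
        nhdsWithin_le_nhds
    simpa using (hlim.add_const α⁻¹).mul hexp
  have hFx : α⁻¹ ≤ (h x + α⁻¹) * exp (-(α * x)) := by
    refine le_of_tendsto hFlim ?_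
    filter_upwards [Ioc_mem_nhdsGT hx] with y hy
    exact hmono hy.1 hx hy.2
  have hexp : exp (α * x) * exp (-(α * x)) = 1 := by rw [← exp_add]; simp
  calc (exp (α * x) - 1) / α = exp (α * x) * α⁻¹ - α⁻¹ := by ring
    _ ≤ exp (α * x) * ((h x + α⁻¹) * exp (-(α * x))) - α⁻¹ := by gcongr
    _ = h x := by linear_combination (h x + α⁻¹) * hexp

end IntegratingFactor

/-- Grönwall-type bound: if `−g''/g' ≥ α > 0` on `(0,∞)` with `g, g' > 0` and
`g/g' → 0` at `0⁺`, then `g(x)/g'(x) ≥ (e^{αx} − 1)/α` for all `x > 0`. -/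
theorem stmt_13 (g g' g'' : ℝ → ℝ) (α : ℝ) (hα : 0 < α)
    (hg : ∀ x : ℝ, 0 < x → HasDerivAt g (g' x) x)
    (hg' : ∀ x : ℝ, 0 < x → HasDerivAt g' (g'' x) x)
    (hgpos : ∀ x : ℝ, 0 < x → 0 < g x)
    (hg'pos : ∀ x : ℝ, 0 < x → 0 < g' x)
    (hAP : ∀ x : ℝ, 0 < x → α ≤ -(g'' x) / g' x)
    (hlim : Tendsto (fun x => g x / g' x) (nhdsWithin 0 (Ioi 0)) (nhds 0)) :
    ∀ x : ℝ, 0 < x → (Real.exp (α * x) - 1) / α ≤ g x / g' x := fun _ hx =>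
  exp_sub_one_div_le_of_one_add_mul_le_deriv hα.ne'
    (fun y hy => hasDerivAt_div_deriv (hg y hy) (hg' y hy) (hg'pos y hy).ne')
    (fun y hy => one_add_mul_div_le_of_le_neg_div (hgpos y hy).le (hg'pos y hy) (hAP y hy))
    hlim hx
end

section
/- In the UQC setting with bias β ∈ (0,1/2), the agent's return from learning the state under the interval delegation set [β, y₀], namely Δ_A(y₀) = ∫_0^1 [u_A(min(θ+β,y₀),θ) − u_A(y*,θ)] dθ where y* = min(1/2+β, y₀) is the agent's uninformed decision, is strictly increasing in y₀ for y₀ ∈ (β, 1/2+β). -/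
/-! On `(β, 1/2 + β)` the uninformed agent picks `y₀`, and the gain from information in state `θ`
is `((y₀ - β - θ)⁺)²`; integrating over `θ ∈ [0, 1]` gives `Δ_A(y₀) = (y₀ - β)³ / 3`. -/

open Set

lemma integral_max_sub_zero_sq {c : ℝ} (hc₀ : 0 ≤ c) (hc₁ : c ≤ 1) :
    ∫ θ in (0:ℝ)..1, max (c - θ) 0 ^ 2 = c ^ 3 / 3 := by
  have hcont : Continuous fun θ : ℝ => max (c - θ) 0 ^ 2 := by fun_prop
  rw [← intervalIntegral.integral_add_adjacent_intervals (b := c)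
    (hcont.intervalIntegrable _ _) (hcont.intervalIntegrable _ _)]
  have h_left : ∫ θ in (0:ℝ)..c, max (c - θ) 0 ^ 2 = c ^ 3 / 3 := by
    rw [intervalIntegral.integral_congr (g := fun θ => (c - θ) ^ 2) fun θ hθ => by
      rw [uIcc_of_le hc₀] at hθ
      simp only [max_eq_left (sub_nonneg.2 hθ.2)]]
    norm_num [intervalIntegral.integral_comp_sub_left (fun x : ℝ => x ^ 2), integral_pow]
  have h_right : ∫ θ in c..(1:ℝ), max (c - θ) 0 ^ 2 = 0 := by
    rw [intervalIntegral.integral_congr (g := fun _ => (0:ℝ)) fun θ hθ => by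
      rw [uIcc_of_le hc₁] at hθ
      simp [max_eq_right (sub_nonpos.2 hθ.1)]]
    exact intervalIntegral.integral_zero
  rw [h_left, h_right, add_zero]

lemma neg_sq_min_sub_sub_neg_sq (β y θ : ℝ) :
    -(min (θ + β) y - θ - β) ^ 2 - -(y - θ - β) ^ 2 = max (y - β - θ) 0 ^ 2 := by
  rcases le_total (θ + β) y with h | h
  · rw [min_eq_left h, max_eq_left (by linarith)]
    ring
  · rw [min_eq_right h, max_eq_right (by linarith)]
    ring

theorem stmt_17_general (β : ℝ) :
    StrictMonoOn
      (fun y₀ => ∫ θ in (0:ℝ)..1,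
        ((-(min (θ + β) y₀ - θ - β) ^ 2) - (-(min (1/2 + β) y₀ - θ - β) ^ 2)))
      (Ioo β (1/2 + β)) := by
  have value : ∀ y₀ ∈ Ioo β (1/2 + β), (∫ θ in (0:ℝ)..1,
      ((-(min (θ + β) y₀ - θ - β) ^ 2) - (-(min (1/2 + β) y₀ - θ - β) ^ 2)))
        = (y₀ - β) ^ 3 / 3 := by
    rintro y₀ ⟨hβy₀, hy₀⟩
    simp_rw [min_eq_right hy₀.le, neg_sq_min_sub_sub_neg_sq]
    exact integral_max_sub_zero_sq (by linarith) (by linarith)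
  intro x hx y hy hxy
  simp only [value x hx, value y hy]
  have hx₀ : 0 ≤ x - β := sub_nonneg.2 hx.1.le
  gcongr

/-- In the UQC setting with bias `β ∈ (0,1/2)`, the agent's return from learning the state
under the interval delegation set `[β, y₀]` is strictly increasing in `y₀` on `(β, 1/2+β)`. -/
theorem stmt_17 (β : ℝ) (hβ : β ∈ Ioo (0:ℝ) (1/2)) :
    StrictMonoOn
      (fun y₀ => ∫ θ in (0:ℝ)..1,
        ((-(min (θ + β) y₀ - θ - β) ^ 2) - (-(min (1/2 + β) y₀ - θ - β) ^ 2)))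
      (Ioo β (1/2 + β)) :=
  stmt_17_general β
end

section
/- Suppose the principal's payoff from delegation set D against cost function c is U_P(D;c) = (1 − ê_c(Δ_A(D)))·u_{P,0}(D) + ê_c(Δ_A(D))·u_{P,1}(D), where ê_c = (c')⁻¹. If c₁ and c₂ are two admissible cost functions with c₁'(e) ≤ c₂'(e) for all e, and if for the optimal set D* under c₂ we have u_{P,1}(D*) > u_{P,0}(D*), then sup_D U_P(D;c₁) ≥ U_P(D*;c₁) ≥ U_P(D*;c₂) = sup_D U_P(D;c₂), with the middle inequality strict when c₁'(e) < c₂'(e) in a neighborhood of ê_{c₂}(Δ_A(D*)) and Δ_A(D*) > 0. -/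
open Set Filter

/-- Lower marginal costs benefit the principal: if `c₁' ≤ c₂'` pointwise and `D*` is optimal
under `c₂` with `u_{P,1}(D*) > u_{P,0}(D*)`, then
`sup_D U_P(D;c₁) ≥ U_P(D*;c₁) ≥ U_P(D*;c₂) = sup_D U_P(D;c₂)`, the middle inequality strict
when `c₁' < c₂'` near `ê₂(Δ_A(D*))` and `Δ_A(D*) > 0`. -/
theorem stmt_19 {ι : Type*} (uP0 uP1 ΔA : ι → ℝ) (hΔA : ∀ D, 0 ≤ ΔA D)
    (c₁' c₂' : ℝ → ℝ) (e₁ e₂ : ℝ → ℝ)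
    (hc₁mono : StrictMonoOn c₁' (Ico (0:ℝ) 1)) (hc₂mono : StrictMonoOn c₂' (Ico (0:ℝ) 1))
    (hc₁0 : c₁' 0 = 0) (hc₂0 : c₂' 0 = 0)
    (he₁ : e₁ 0 = 0 ∧ ∀ x : ℝ, 0 < x → e₁ x ∈ Ioo (0:ℝ) 1 ∧ c₁' (e₁ x) = x)
    (he₂ : e₂ 0 = 0 ∧ ∀ x : ℝ, 0 < x → e₂ x ∈ Ioo (0:ℝ) 1 ∧ c₂' (e₂ x) = x)
    (hle : ∀ x ∈ Ico (0:ℝ) 1, c₁' x ≤ c₂' x)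
    (D' : ι)
    (hopt : ∀ D : ι, (1 - e₂ (ΔA D)) * uP0 D + e₂ (ΔA D) * uP1 D
      ≤ (1 - e₂ (ΔA D')) * uP0 D' + e₂ (ΔA D') * uP1 D')
    (hgap : uP0 D' < uP1 D')
    (hbdd : BddAbove (Set.range (fun D => (1 - e₁ (ΔA D)) * uP0 D + e₁ (ΔA D) * uP1 D))) :
    ((⨆ D : ι, ((1 - e₂ (ΔA D)) * uP0 D + e₂ (ΔA D) * uP1 D))
        = (1 - e₂ (ΔA D')) * uP0 D' + e₂ (ΔA D') * uP1 D') ∧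
    ((1 - e₂ (ΔA D')) * uP0 D' + e₂ (ΔA D') * uP1 D'
        ≤ (1 - e₁ (ΔA D')) * uP0 D' + e₁ (ΔA D') * uP1 D') ∧
    ((1 - e₁ (ΔA D')) * uP0 D' + e₁ (ΔA D') * uP1 D'
        ≤ ⨆ D : ι, ((1 - e₁ (ΔA D)) * uP0 D + e₁ (ΔA D) * uP1 D)) ∧
    ((0 < ΔA D' ∧ ∃ ε > 0, ∀ t ∈ Ico (0:ℝ) 1, |t - e₂ (ΔA D')| < ε → c₁' t < c₂' t) →
      (1 - e₂ (ΔA D')) * uP0 D' + e₂ (ΔA D') * uP1 D'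
        < (1 - e₁ (ΔA D')) * uP0 D' + e₁ (ΔA D') * uP1 D') := by
  obtain ⟨he₁0, he₁pos⟩ := he₁
  obtain ⟨he₂0, he₂pos⟩ := he₂
  -- e₂ x ≤ e₁ x for x ≥ 0
  have key : ∀ x : ℝ, 0 ≤ x → e₂ x ≤ e₁ x := by
    intro x hx
    rcases eq_or_lt_of_le hx with h | h
    · simp [← h, he₁0, he₂0]
    · obtain ⟨h1mem, h1eq⟩ := he₁pos x h
      obtain ⟨h2mem, h2eq⟩ := he₂pos x h
      by_contra hlt
      push_neg at hlt
      have m1 : e₁ x ∈ Ico (0:ℝ) 1 := ⟨le_of_lt h1mem.1, h1mem.2⟩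
      have m2 : e₂ x ∈ Ico (0:ℝ) 1 := ⟨le_of_lt h2mem.1, h2mem.2⟩
      have := hc₁mono m1 m2 hlt
      rw [h1eq] at this
      have h2 : c₁' (e₂ x) ≤ c₂' (e₂ x) := hle _ m2
      rw [h2eq] at h2
      linarith
  have hmid : (1 - e₂ (ΔA D')) * uP0 D' + e₂ (ΔA D') * uP1 D'
      ≤ (1 - e₁ (ΔA D')) * uP0 D' + e₁ (ΔA D') * uP1 D' := by
    have := key (ΔA D') (hΔA D')
    nlinarith [this, hgap]
  have : Nonempty ι := ⟨D'⟩
  refine ⟨?_, hmid, le_ciSup hbdd D', ?_⟩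
  · have hb2 : BddAbove (Set.range (fun D => (1 - e₂ (ΔA D)) * uP0 D + e₂ (ΔA D) * uP1 D)) := by
      refine ⟨(1 - e₂ (ΔA D')) * uP0 D' + e₂ (ΔA D') * uP1 D', ?_⟩
      rintro y ⟨D, rfl⟩
      exact hopt D
    exact le_antisymm (ciSup_le hopt) (le_ciSup hb2 D')
  · rintro ⟨hpos, ε, hε, hnear⟩
    obtain ⟨h1mem, h1eq⟩ := he₁pos _ hpos
    obtain ⟨h2mem, h2eq⟩ := he₂pos _ hpos
    have m2 : e₂ (ΔA D') ∈ Ico (0:ℝ) 1 := ⟨le_of_lt h2mem.1, h2mem.2⟩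
    have hstrict : c₁' (e₂ (ΔA D')) < c₂' (e₂ (ΔA D')) := by
      apply hnear _ m2; simp [hε]
    have : e₂ (ΔA D') < e₁ (ΔA D') := by
      by_contra hge
      push_neg at hge
      rcases eq_or_lt_of_le hge with h | h
      · have h3 : c₁' (e₂ (ΔA D')) = ΔA D' := h ▸ h1eq
        linarith
      · have m1 : e₁ (ΔA D') ∈ Ico (0:ℝ) 1 := ⟨le_of_lt h1mem.1, h1mem.2⟩
        have h4 := hc₁mono m1 m2 h
        linarith
    nlinarith [this, hgap]
end
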